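/- Let E be a real inner product space and let u : (0, ∞) × ℝ → E, (r, t) ↦ u(r, t), be twice continuously differentiable. Define e = (1/2)(‖∂_r u‖² + ‖∂_t u‖²), m = ⟨∂_r u, ∂_t u⟩, and L = (1/2)(‖∂_r u‖² − ‖∂_t u‖²). Assume the orthogonality conditions ⟨∂²_{tt} u − ∂²_{rr} u − r^{−1} ∂_r u, ∂_t u⟩ = 0 and ⟨∂²_{tt} u − ∂²_{rr} u − r^{−1} ∂_r u, ∂_r u⟩ = 0 hold at every point (r, t). Then at every point (r, t): ∂_t(r·e) − ∂_r(r·m) = 0 and ∂_t(r·m) − ∂_r(r·e) = L. -/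

import Mathlib

open scoped RealInnerProductSpace

/-- The partial derivative `∂_r u` of `u = u(r,t)`. -/
noncomputable def pr {E : Type*} [NormedAddCommGroup E] [NormedSpace ℝ E]
    (u : ℝ × ℝ → E) (p : ℝ × ℝ) : E :=
  fderiv ℝ u p (1, 0)

/-- The partial derivative `∂_t u` of `u = u(r,t)`. -/
noncomputable def pt {E : Type*} [NormedAddCommGroup E] [NormedSpace ℝ E]
    (u : ℝ × ℝ → E) (p : ℝ × ℝ) : E :=
  fderiv ℝ u p (0, 1)

/-- The energy density `e = (1/2)(‖∂_r u‖² + ‖∂_t u‖²)`. -/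
noncomputable def eDen {E : Type*} [NormedAddCommGroup E] [InnerProductSpace ℝ E]
    (u : ℝ × ℝ → E) (p : ℝ × ℝ) : ℝ :=
  (‖pr u p‖ ^ 2 + ‖pt u p‖ ^ 2) / 2

/-- The momentum density `m = ⟨∂_r u, ∂_t u⟩`. -/
noncomputable def mDen {E : Type*} [NormedAddCommGroup E] [InnerProductSpace ℝ E]
    (u : ℝ × ℝ → E) (p : ℝ × ℝ) : ℝ :=
  ⟪pr u p, pt u p⟫

/-- The Lagrangian density `L = (1/2)(‖∂_r u‖² - ‖∂_t u‖²)`. -/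
noncomputable def LDen {E : Type*} [NormedAddCommGroup E] [InnerProductSpace ℝ E]
    (u : ℝ × ℝ → E) (p : ℝ × ℝ) : ℝ :=
  (‖pr u p‖ ^ 2 - ‖pt u p‖ ^ 2) / 2

/-- Local conservation laws for (the radial profile of) a wave map: if `u` is `C²` on
`(0,∞) × ℝ` and the wave operator `∂²_tt u - ∂²_rr u - r⁻¹ ∂_r u` is orthogonal to both
`∂_t u` and `∂_r u`, then `∂_t(re) - ∂_r(rm) = 0` and `∂_t(rm) - ∂_r(re) = L`. -/
theorem stmt_11 {E : Type*} [NormedAddCommGroup E] [InnerProductSpace ℝ E]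
    (u : ℝ × ℝ → E)
    (hu : ContDiffOn ℝ 2 u {p : ℝ × ℝ | 0 < p.1})
    (horth₁ : ∀ p : ℝ × ℝ, 0 < p.1 →
      ⟪fderiv ℝ (pt u) p (0, 1) - fderiv ℝ (pr u) p (1, 0) - p.1⁻¹ • pr u p,
        pt u p⟫ = 0)
    (horth₂ : ∀ p : ℝ × ℝ, 0 < p.1 →
      ⟪fderiv ℝ (pt u) p (0, 1) - fderiv ℝ (pr u) p (1, 0) - p.1⁻¹ • pr u p,
        pr u p⟫ = 0) :
    ∀ p : ℝ × ℝ, 0 < p.1 →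
      deriv (fun t => p.1 * eDen u (p.1, t)) p.2
          - deriv (fun r => r * mDen u (r, p.2)) p.1 = 0 ∧
      deriv (fun t => p.1 * mDen u (p.1, t)) p.2
          - deriv (fun r => r * eDen u (r, p.2)) p.1 = LDen u p := by
  rintro ⟨r, t⟩ hr
  simp only [Set.mem_setOf_eq] at hr
  have hr' : (r : ℝ) ≠ 0 := ne_of_gt hr
  set p : ℝ × ℝ := (r, t) with hp
  have hΩ : IsOpen {q : ℝ × ℝ | 0 < q.1} := isOpen_lt continuous_const continuous_fst
  have hcd : ContDiffAt ℝ 2 u p := hu.contDiffAt (hΩ.mem_nhds hr)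
  have hf' : ContDiffAt ℝ 1 (fderiv ℝ u) p := hcd.fderiv_right (by norm_num)
  have hd : DifferentiableAt ℝ (fderiv ℝ u) p := hf'.differentiableAt one_ne_zero
  have hdpr : DifferentiableAt ℝ (pr u) p :=
    (hf'.clm_apply contDiffAt_const).differentiableAt one_ne_zero
  have hdpt : DifferentiableAt ℝ (pt u) p :=
    (hf'.clm_apply contDiffAt_const).differentiableAt one_ne_zero
  have hApr : ∀ v, fderiv ℝ (pr u) p v = fderiv ℝ (fderiv ℝ u) p v (1, 0) := by
    intro v
    have : fderiv ℝ (fun q => fderiv ℝ u q (1, 0)) p =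
        (fderiv ℝ u p).comp (fderiv ℝ (fun _ : ℝ × ℝ => ((1 : ℝ), (0 : ℝ))) p) +
          (fderiv ℝ (fderiv ℝ u) p).flip (1, 0) :=
      fderiv_clm_apply hd (differentiableAt_const _)
    have h2 : fderiv ℝ (pr u) p = (fderiv ℝ (fderiv ℝ u) p).flip (1, 0) := by
      rw [show pr u = fun q => fderiv ℝ u q (1, 0) from rfl, this]
      simp
    rw [h2]; rfl
  have hApt : ∀ v, fderiv ℝ (pt u) p v = fderiv ℝ (fderiv ℝ u) p v (0, 1) := by
    intro v
    have : fderiv ℝ (fun q => fderiv ℝ u q (0, 1)) p =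
        (fderiv ℝ u p).comp (fderiv ℝ (fun _ : ℝ × ℝ => ((0 : ℝ), (1 : ℝ))) p) +
          (fderiv ℝ (fderiv ℝ u) p).flip (0, 1) :=
      fderiv_clm_apply hd (differentiableAt_const _)
    have h2 : fderiv ℝ (pt u) p = (fderiv ℝ (fderiv ℝ u) p).flip (0, 1) := by
      rw [show pt u = fun q => fderiv ℝ u q (0, 1) from rfl, this]
      simp
    rw [h2]; rfl
  have hkey : fderiv ℝ (pr u) p (0, 1) = fderiv ℝ (pt u) p (1, 0) := by
    rw [hApr, hApt]
    exact (hcd.isSymmSndFDerivAt (by simp)) (0, 1) (1, 0)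
  set a := pr u p with ha
  set b := pt u p with hb
  set A10 := fderiv ℝ (pr u) p (1, 0) with hA10
  set B10 := fderiv ℝ (pt u) p (1, 0) with hB10
  set B01 := fderiv ℝ (pt u) p (0, 1) with hB01
  -- lines
  have hlt : HasDerivAt (fun s : ℝ => ((r : ℝ), s)) ((0 : ℝ), (1 : ℝ)) t :=
    (hasDerivAt_const t r).prodMk (hasDerivAt_id t)
  have hlr : HasDerivAt (fun s : ℝ => (s, (t : ℝ))) ((1 : ℝ), (0 : ℝ)) r :=
    (hasDerivAt_id r).prodMk (hasDerivAt_const r t)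
  have hprt : HasDerivAt (fun s => pr u (r, s)) B10 t := by
    have := hdpr.hasFDerivAt.comp_hasDerivAt t hlt
    rw [hkey] at this
    exact this
  have hptt : HasDerivAt (fun s => pt u (r, s)) B01 t :=
    hdpt.hasFDerivAt.comp_hasDerivAt t hlt
  have hprr : HasDerivAt (fun s => pr u (s, t)) A10 r := by
    have := hdpr.hasFDerivAt.comp_hasDerivAt r hlr
    exact this
  have hptr : HasDerivAt (fun s => pt u (s, t)) B10 r := by
    have := hdpt.hasFDerivAt.comp_hasDerivAt r hlr
    exact this
  -- e, m as inner products
  have heform : ∀ q : ℝ × ℝ, eDen u q = (⟪pr u q, pr u q⟫ + ⟪pt u q, pt u q⟫) / 2 := by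
    intro q; simp [eDen, real_inner_self_eq_norm_sq]
  have hLform : LDen u p = (⟪a, a⟫ - ⟪b, b⟫) / 2 := by
    simp [LDen, real_inner_self_eq_norm_sq]; rfl
  -- derivatives of r*e, r*m in each direction
  have het : HasDerivAt (fun s => r * eDen u (r, s))
      (r * ((⟪a, B10⟫ + ⟪B10, a⟫ + (⟪b, B01⟫ + ⟪B01, b⟫)) / 2)) t := by
    have h1 := (hprt.inner ℝ hprt).add (hptt.inner ℝ hptt)
    have h2 := (h1.div_const 2).const_mul r
    simpa only [heform, Pi.add_apply] using h2
  have hmt : HasDerivAt (fun s => r * mDen u (r, s))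
      (r * (⟪a, B01⟫ + ⟪B10, b⟫)) t := by
    have h1 := (hprt.inner ℝ hptt).const_mul r
    simpa only [mDen] using h1
  have hmr : HasDerivAt (fun s => s * mDen u (s, t))
      (1 * ⟪a, b⟫ + r * (⟪a, B10⟫ + ⟪A10, b⟫)) r := by
    have h1 := (hasDerivAt_id r).mul (hprr.inner ℝ hptr)
    simpa only [mDen, id, Pi.mul_def] using h1
  have her : HasDerivAt (fun s => s * eDen u (s, t))
      (1 * ((⟪a, a⟫ + ⟪b, b⟫) / 2) +
        r * ((⟪a, A10⟫ + ⟪A10, a⟫ + (⟪b, B10⟫ + ⟪B10, b⟫)) / 2)) r := by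
    have h1 := ((hprr.inner ℝ hprr).add (hptr.inner ℝ hptr)).div_const 2
    have h2 := (hasDerivAt_id r).mul h1
    simp only [heform]
    simpa only [id, Pi.mul_def, Pi.add_apply] using h2
  rw [het.deriv, hmt.deriv, hmr.deriv, her.deriv, hLform]
  -- orthogonality conditions, scalar form
  have ho1 : ⟪B01, b⟫ - ⟪A10, b⟫ - r⁻¹ * ⟪a, b⟫ = 0 := by
    have := horth₁ p hr
    simpa [inner_sub_left, inner_add_left, real_inner_smul_left, sub_sub] using this
  have ho2 : ⟪B01, a⟫ - ⟪A10, a⟫ - r⁻¹ * ⟪a, a⟫ = 0 := by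
    have := horth₂ p hr
    simpa [inner_sub_left, inner_add_left, real_inner_smul_left, sub_sub] using this
  have h1 : r * (r⁻¹ * ⟪a, b⟫) = ⟪a, b⟫ := by field_simp
  have h2 : r * (r⁻¹ * ⟪a, a⟫) = ⟪a, a⟫ := by field_simp
  have hc1 : ⟪b, B01⟫ = ⟪B01, b⟫ := real_inner_comm _ _
  have hc2 : ⟪a, B01⟫ = ⟪B01, a⟫ := real_inner_comm _ _
  have hc3 : ⟪a, A10⟫ = ⟪A10, a⟫ := real_inner_comm _ _
  have hc4 : ⟪b, B10⟫ = ⟪B10, b⟫ := real_inner_comm _ _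
  have hc5 : ⟪a, B10⟫ = ⟪B10, a⟫ := real_inner_comm _ _
  constructor
  · linear_combination r * ho1 + h1 + (r / 2) * hc1 - (r / 2) * hc5
  · linear_combination r * ho2 + h2 + r * hc2 - (r / 2) * hc3 - (r / 2) * hc4
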